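/- Let K ≥ 1 and let H₁,…,H_K, G be independent Exp(1) random variables with M = max(H₁,…,H_K). Then lim_{P̄ → ∞} R⁻_K(P̄) = sup_{T ≥ 0} E[log(M/G)·1{M ≥ T}]. -/

import Mathlib

open MeasureTheory ProbabilityTheory Real Filter

/-- The achievable (lower-bound) secrecy sum-rate `R⁻(P̄)`: the supremum, over
measurable power allocations `p : [0,∞) → [0,∞)` with `E[p(M)] ≤ P̄`, of
`E[log(1 + M·p(M)) − log(1 + G·p(M))]`. -/
noncomputable def Rminus {Ω : Type*} [MeasurableSpace Ω] (μ : Measure Ω)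
    (M G : Ω → ℝ) (P : ℝ) : ℝ :=
  sSup {r : ℝ | ∃ p : ℝ → ℝ, Measurable p ∧ (∀ x, 0 ≤ p x) ∧
    (∫ ω, p (M ω) ∂μ) ≤ P ∧
    r = ∫ ω, (Real.log (1 + M ω * p (M ω)) - Real.log (1 + G ω * p (M ω))) ∂μ}

/-- The upper bound `R⁺(P̄)`: the supremum, over measurable power allocations
`p : [0,∞) → [0,∞)` with `E[p(M)] ≤ P̄`, of
`E[max(0, log(1 + M·p(M)) − log(1 + G·p(M)))]`. -/
noncomputable def Rplus {Ω : Type*} [MeasurableSpace Ω] (μ : Measure Ω)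
    (M G : Ω → ℝ) (P : ℝ) : ℝ :=
  sSup {r : ℝ | ∃ p : ℝ → ℝ, Measurable p ∧ (∀ x, 0 ≤ p x) ∧
    (∫ ω, p (M ω) ∂μ) ≤ P ∧
    r = ∫ ω, max 0
      (Real.log (1 + M ω * p (M ω)) - Real.log (1 + G ω * p (M ω))) ∂μ}

/-!
Fix a gain `m > 0` and a power `ρ ≥ 0`. Jensen's inequality for the convex function
`x ↦ log (1 + exp x * ρ)` at `x = log G` gives
`E log (1 + G ρ) ≥ log (1 + exp (E log G) * ρ)`, and
`log (1 + m ρ) - log (1 + m' ρ) ≤ (log m - log m')⁺`, so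
`log (1 + m ρ) - E log (1 + G ρ) ≤ (log m - E log G)⁺`. As `M` and `G` are independent,
integrating over `M` bounds every `R⁻(P̄)` by `E[(log M - E log G)⁺]`. This bound equals
`E[log (M / G) · 1{M ≥ T}]` for `T = exp (E log G)` and dominates it for every other `T`.
Conversely, the on-off allocation `P̄ · 1{M ≥ T}` is admissible, and by dominated convergence
its rate tends to `E[log (M / G) · 1{M ≥ T}]` as `P̄ → ∞`.
-/

open Set

lemma log_one_add_mul_sub_log_one_add_mul_le {a b t : ℝ} (ha : 0 < a) (hb : 0 < b)
    (ht : 0 ≤ t) : log (1 + a * t) - log (1 + b * t) ≤ max (log a - log b) 0 := by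
  have hat : 0 < 1 + a * t := by positivity
  have hbt : 0 < 1 + b * t := by positivity
  rcases le_total a b with hab | hba
  · have : log (1 + a * t) ≤ log (1 + b * t) := log_le_log hat (by gcongr)
    exact le_max_of_le_right (by linarith)
  · refine le_max_of_le_left ?_
    rw [← log_div hat.ne' hbt.ne', ← log_div ha.ne' hb.ne']
    refine log_le_log (by positivity) ?_
    rw [div_le_div_iff₀ hbt hb]
    nlinarith

lemma abs_log_one_add_mul_sub_log_one_add_mul_le {a b t : ℝ} (ha : 0 < a) (hb : 0 < b)
    (ht : 0 ≤ t) : |log (1 + a * t) - log (1 + b * t)| ≤ |log a - log b| := by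
  refine abs_sub_le_iff.2 ⟨?_, ?_⟩
  · exact (log_one_add_mul_sub_log_one_add_mul_le ha hb ht).trans
      (max_le (le_abs_self _) (abs_nonneg _))
  · exact (log_one_add_mul_sub_log_one_add_mul_le hb ha ht).trans
      (max_le (abs_sub_comm (log a) _ ▸ le_abs_self _) (abs_nonneg _))

lemma tendsto_log_one_add_mul_sub_log {a : ℝ} (ha : 0 < a) :
    Tendsto (fun t => log (1 + a * t) - log t) atTop (nhds (log a)) := by
  have hlim : Tendsto (fun t : ℝ => log (a + t⁻¹)) atTop (nhds (log a)) := by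
    simpa using (tendsto_inv_atTop_zero.const_add a).log (by simpa using ha.ne')
  refine hlim.congr' ?_
  filter_upwards [eventually_gt_atTop 0] with t ht
  rw [← log_div (by positivity) ht.ne']
  congr 1
  field_simp
  ring

lemma tendsto_log_one_add_mul_sub_log_one_add_mul {a b : ℝ} (ha : 0 < a) (hb : 0 < b) :
    Tendsto (fun t => log (1 + a * t) - log (1 + b * t)) atTop (nhds (log a - log b)) :=
  ((tendsto_log_one_add_mul_sub_log ha).sub (tendsto_log_one_add_mul_sub_log hb)).congr
    fun t => by ring

lemma convexOn_log_one_add_exp_mul {ρ : ℝ} (hρ : 0 ≤ ρ) :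
    ConvexOn ℝ univ (fun x => log (1 + exp x * ρ)) := by
  have hpos : ∀ x, 0 < 1 + exp x * ρ := fun x => by positivity
  have hderiv : ∀ x, HasDerivAt (fun x => log (1 + exp x * ρ))
      (exp x * ρ / (1 + exp x * ρ)) x :=
    fun x => (((hasDerivAt_exp x).mul_const ρ).const_add 1).log (hpos x).ne'
  refine Monotone.convexOn_univ_of_deriv (fun x => (hderiv x).differentiableAt) ?_
  intro x y hxy
  rw [(hderiv x).deriv, (hderiv y).deriv, div_le_div_iff₀ (hpos x) (hpos y)]
  nlinarith [mul_le_mul_of_nonneg_right (exp_le_exp.2 hxy) hρ]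

section GeometricMean

variable {α : Type*} [MeasurableSpace α] {ν : Measure α} {f : α → ℝ}

lemma integrable_log_one_add_mul [IsFiniteMeasure ν] (hf : ∀ᵐ x ∂ν, 0 < f x)
    (hf_meas : Measurable f) (hlog : Integrable (fun x => log (f x)) ν) {ρ : ℝ}
    (hρ : 0 ≤ ρ) :
    Integrable (fun x => log (1 + f x * ρ)) ν := by
  refine (hlog.abs.add (integrable_const |log (1 + ρ)|)).mono'
    (measurable_log.comp (measurable_const.add (hf_meas.mul_const ρ))).aestronglyMeasurable ?_
  filter_upwards [hf] with x hx
  have := abs_log_one_add_mul_sub_log_one_add_mul_le hx one_pos hρ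
  rw [one_mul, log_one, sub_zero] at this
  rw [norm_eq_abs, Pi.add_apply]
  linarith [abs_sub_abs_le_abs_sub (log (1 + f x * ρ)) (log (1 + ρ))]

lemma log_one_add_exp_integral_log_mul_le [IsProbabilityMeasure ν] (hf : ∀ᵐ x ∂ν, 0 < f x)
    (hf_meas : Measurable f) (hlog : Integrable (fun x => log (f x)) ν) {ρ : ℝ}
    (hρ : 0 ≤ ρ) :
    log (1 + exp (∫ x, log (f x) ∂ν) * ρ) ≤ ∫ x, log (1 + f x * ρ) ∂ν := by
  have hcomp : (fun x => log (1 + exp (log (f x)) * ρ)) =ᵐ[ν] fun x => log (1 + f x * ρ) := by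
    filter_upwards [hf] with x hx
    rw [exp_log hx]
  have hcont : Continuous fun x => log (1 + exp x * ρ) :=
    (by fun_prop : Continuous fun x => 1 + exp x * ρ).log fun x => by positivity
  calc _ ≤ ∫ x, log (1 + exp (log (f x)) * ρ) ∂ν :=
        (convexOn_log_one_add_exp_mul hρ).map_integral_le hcont.continuousOn isClosed_univ
          (Eventually.of_forall fun _ => mem_univ _) hlog
          ((integrable_log_one_add_mul hf hf_meas hlog hρ).congr hcomp.symm)
    _ = _ := integral_congr_ae hcomp

lemma log_one_add_mul_sub_integral_le [IsProbabilityMeasure ν] (hf : ∀ᵐ x ∂ν, 0 < f x)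
    (hf_meas : Measurable f) (hlog : Integrable (fun x => log (f x)) ν) {m ρ : ℝ} (hm : 0 < m)
    (hρ : 0 ≤ ρ) :
    log (1 + m * ρ) - ∫ x, log (1 + f x * ρ) ∂ν ≤ max (log m - ∫ x, log (f x) ∂ν) 0 :=
  calc _ ≤ log (1 + m * ρ) - log (1 + exp (∫ x, log (f x) ∂ν) * ρ) := by
        gcongr
        exact log_one_add_exp_integral_log_mul_le hf hf_meas hlog hρ
    _ ≤ _ := by simpa using log_one_add_mul_sub_log_one_add_mul_le hm (exp_pos _) hρ

end GeometricMean

section IndepPair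

variable {Ω 𝓧 𝓨 E : Type*} [MeasurableSpace Ω] [MeasurableSpace 𝓧] [MeasurableSpace 𝓨]
  [NormedAddCommGroup E] {μ : Measure Ω} [IsFiniteMeasure μ]
  {X : Ω → 𝓧} {Y : Ω → 𝓨} {F : 𝓧 × 𝓨 → E}

lemma ProbabilityTheory.IndepFun.integrable_prod_map (hXY : IndepFun X Y μ)
    (hX : Measurable X) (hY : Measurable Y) (hF : StronglyMeasurable F)
    (hFi : Integrable (fun ω => F (X ω, Y ω)) μ) :
    Integrable F ((μ.map X).prod (μ.map Y)) := by
  rw [← (indepFun_iff_map_prod_eq_prod_map_map hX.aemeasurable hY.aemeasurable).1 hXY]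
  exact (integrable_map_measure hF.aestronglyMeasurable (hX.prodMk hY).aemeasurable).2 hFi

lemma ProbabilityTheory.IndepFun.integral_comp_eq_integral_integral [NormedSpace ℝ E]
    (hXY : IndepFun X Y μ) (hX : Measurable X) (hY : Measurable Y) (hF : StronglyMeasurable F)
    (hFi : Integrable (fun ω => F (X ω, Y ω)) μ) :
    ∫ ω, F (X ω, Y ω) ∂μ = ∫ x, ∫ y, F (x, y) ∂(μ.map Y) ∂(μ.map X) := by
  rw [← integral_prod F (hXY.integrable_prod_map hX hY hF hFi),
    ← (indepFun_iff_map_prod_eq_prod_map_map hX.aemeasurable hY.aemeasurable).1 hXY,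
    integral_map (hX.prodMk hY).aemeasurable hF.aestronglyMeasurable]

end IndepPair

lemma ProbabilityTheory.iIndepFun.indepFun_iSup_option {Ω ι : Type*} [MeasurableSpace Ω]
    {μ : Measure Ω} [Fintype ι] {X : ι → Ω → ℝ} {Y : Ω → ℝ}
    (h : iIndepFun (fun i : Option ι => Option.elim i Y X) μ) (hX : ∀ i, Measurable (X i))
    (hY : Measurable Y) : IndepFun (fun ω => ⨆ i, X i ω) Y μ := by
  classical
  have hmeas : ∀ i, Measurable (Option.elim i Y X) := by
    rintro (_ | i)
    exacts [hY, hX i]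
  set S : Finset (Option ι) := Finset.univ.erase none
  have hsome : ∀ i : ι, some i ∈ S := fun i => by simp [S]
  have hφ : Measurable fun v : S → ℝ => ⨆ i, v ⟨some i, hsome i⟩ :=
    Measurable.iSup fun i => measurable_pi_apply _
  have hψ : Measurable fun v : ({none} : Finset (Option ι)) → ℝ =>
      v ⟨none, Finset.mem_singleton_self _⟩ :=
    measurable_pi_apply _
  exact (h.indepFun_finset S {none} (by simp [S]) hmeas).comp hφ hψ

lemma abs_log_le_two_mul_rpow_add_rpow {x : ℝ} (hx : 0 < x) :
    |log x| ≤ 2 * (x ^ (1 / 2 : ℝ) + x ^ (-(1 / 2) : ℝ)) := by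
  have hpos := log_le_rpow_div hx.le (by norm_num : (0 : ℝ) < 1 / 2)
  have hneg := log_le_rpow_div (inv_pos.2 hx).le (by norm_num : (0 : ℝ) < 1 / 2)
  rw [log_inv, inv_rpow hx.le, ← rpow_neg hx.le] at hneg
  have h1 : 0 ≤ x ^ (1 / 2 : ℝ) := by positivity
  have h2 : 0 ≤ x ^ (-(1 / 2) : ℝ) := by positivity
  rw [abs_le]
  constructor <;> linarith

lemma ae_pos_expMeasure {r : ℝ} (hr : 0 < r) : ∀ᵐ x ∂expMeasure r, 0 < x := by
  have := isProbabilityMeasure_expMeasure hr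
  have hIic : expMeasure r (Iic 0) = 0 := by
    rw [← measureReal_eq_zero_iff, ← cdf_eq_real, cdf_expMeasure_eq hr]
    simp
  rw [ae_iff]
  exact measure_mono_null (fun x hx => not_lt.1 hx) hIic

lemma integrable_log_expMeasure {r : ℝ} (hr : 0 < r) : Integrable log (expMeasure r) := by
  change Integrable log (volume.withDensity (exponentialPDF r))
  rw [integrable_withDensity_iff (f := exponentialPDF r)
    (measurable_exponentialPDFReal r).ennreal_ofReal
    (Eventually.of_forall fun _ => ENNReal.ofReal_lt_top)]
  have hbound : Integrable ((Ioi 0).indicator fun x =>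
      2 * r * (x ^ (1 / 2 : ℝ) * exp (-r * x ^ (1 : ℝ)) +
        x ^ (-(1 / 2) : ℝ) * exp (-r * x ^ (1 : ℝ)))) := by
    rw [integrable_indicator_iff measurableSet_Ioi]
    exact ((integrableOn_rpow_mul_exp_neg_mul_rpow (by norm_num) one_pos hr).add
      (integrableOn_rpow_mul_exp_neg_mul_rpow (by norm_num) one_pos hr)).const_mul (2 * r)
  refine hbound.mono' (measurable_log.mul
    (measurable_exponentialPDFReal r).ennreal_ofReal.ennreal_toReal).aestronglyMeasurable
    (Eventually.of_forall fun x => ?_)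
  rcases le_or_gt x 0 with hx | hx
  · rw [indicator_of_notMem (show x ∉ Ioi 0 from not_lt.2 hx)]
    rcases hx.lt_or_eq with hx | rfl
    · simp [exponentialPDF_of_neg hx]
    · simp
  · have hdens : 0 < r * exp (-(r * x)) := by positivity
    rw [indicator_of_mem (mem_Ioi.2 hx), exponentialPDF_eq, if_pos hx.le,
      ENNReal.toReal_ofReal hdens.le, norm_mul, norm_eq_abs, norm_eq_abs, abs_of_pos hdens,
      rpow_one, neg_mul]
    nlinarith [mul_le_mul_of_nonneg_right (abs_log_le_two_mul_rpow_add_rpow hx) hdens.le]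

structure IndepFadingGains {Ω : Type*} [MeasurableSpace Ω] (μ : Measure Ω) (M G : Ω → ℝ) :
    Prop where
  measurable_left : Measurable M
  measurable_right : Measurable G
  indepFun : IndepFun M G μ
  ae_pos_left : ∀ᵐ ω ∂μ, 0 < M ω
  ae_pos_right : ∀ᵐ ω ∂μ, 0 < G ω
  integrable_log_left : Integrable (fun ω => log (M ω)) μ
  integrable_log_right : Integrable (fun ω => log (G ω)) μ

noncomputable def highSNRSecrecyRate {Ω : Type*} [MeasurableSpace Ω] (μ : Measure Ω)
    (M G : Ω → ℝ) : ℝ :=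
  ∫ ω, max (log (M ω) - ∫ ω', log (G ω') ∂μ) 0 ∂μ

lemma highSNRSecrecyRate_nonneg {Ω : Type*} [MeasurableSpace Ω] (μ : Measure Ω)
    (M G : Ω → ℝ) : 0 ≤ highSNRSecrecyRate μ M G :=
  integral_nonneg fun _ => le_max_right _ _

namespace IndepFadingGains

variable {Ω : Type*} [MeasurableSpace Ω] {μ : Measure Ω} {M G : Ω → ℝ}

lemma integrable_abs_log_sub (h : IndepFadingGains μ M G) :
    Integrable (fun ω => |log (M ω) - log (G ω)|) μ :=
  (h.integrable_log_left.sub h.integrable_log_right).abs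

lemma ae_pos_map_left (h : IndepFadingGains μ M G) : ∀ᵐ m ∂(μ.map M), 0 < m :=
  (ae_map_iff h.measurable_left.aemeasurable measurableSet_Ioi).2 h.ae_pos_left

lemma ae_pos_map_right (h : IndepFadingGains μ M G) : ∀ᵐ g ∂(μ.map G), 0 < g :=
  (ae_map_iff h.measurable_right.aemeasurable measurableSet_Ioi).2 h.ae_pos_right

lemma integrable_log_map_right (h : IndepFadingGains μ M G) : Integrable log (μ.map G) :=
  (integrable_map_measure measurable_log.aestronglyMeasurable
    h.measurable_right.aemeasurable).2 h.integrable_log_right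

lemma integral_log_map_right (h : IndepFadingGains μ M G) :
    ∫ g, log g ∂(μ.map G) = ∫ ω, log (G ω) ∂μ :=
  integral_map h.measurable_right.aemeasurable measurable_log.aestronglyMeasurable

theorem integral_log_one_add_mul_sub_le_highSNRSecrecyRate [IsProbabilityMeasure μ]
    (h : IndepFadingGains μ M G) {p : ℝ → ℝ} (hp : Measurable p) (hp0 : ∀ x, 0 ≤ p x) :
    ∫ ω, (log (1 + M ω * p (M ω)) - log (1 + G ω * p (M ω))) ∂μ
      ≤ highSNRSecrecyRate μ M G := by
  have := Measure.isProbabilityMeasure_map (μ := μ) h.measurable_right.aemeasurable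
  set c := ∫ ω, log (G ω) ∂μ with hc
  set F : ℝ × ℝ → ℝ := fun q => log (1 + q.1 * p q.1) - log (1 + q.2 * p q.1)
  have hF : Measurable F := by fun_prop
  have hFi : Integrable (fun ω => F (M ω, G ω)) μ := by
    refine h.integrable_abs_log_sub.mono'
      (hF.comp (h.measurable_left.prodMk h.measurable_right)).aestronglyMeasurable ?_
    filter_upwards [h.ae_pos_left, h.ae_pos_right] with ω hM hG
    exact abs_log_one_add_mul_sub_log_one_add_mul_le hM hG (hp0 _)
  have hinner : ∀ᵐ m ∂(μ.map M), ∫ g, F (m, g) ∂(μ.map G) ≤ max (log m - c) 0 := by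
    filter_upwards [h.ae_pos_map_left] with m hm
    change ∫ g, (log (1 + m * p m) - log (1 + g * p m)) ∂(μ.map G) ≤ _
    rw [integral_sub (integrable_const _) (integrable_log_one_add_mul h.ae_pos_map_right
      measurable_id h.integrable_log_map_right (hp0 m)), integral_const, probReal_univ,
      one_smul, hc, ← h.integral_log_map_right]
    exact log_one_add_mul_sub_integral_le h.ae_pos_map_right measurable_id
      h.integrable_log_map_right hm (hp0 m)
  have hmax : Integrable (fun m => max (log m - c) 0) (μ.map M) :=
    (integrable_map_measure (by fun_prop) h.measurable_left.aemeasurable).2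
      (h.integrable_log_left.sub (integrable_const c)).pos_part
  rw [highSNRSecrecyRate, h.indepFun.integral_comp_eq_integral_integral h.measurable_left
    h.measurable_right hF.stronglyMeasurable hFi,
    ← integral_map h.measurable_left.aemeasurable hmax.aestronglyMeasurable]
  exact integral_mono_ae (h.indepFun.integrable_prod_map h.measurable_left h.measurable_right
    hF.stronglyMeasurable hFi).integral_prod_left hmax hinner

theorem integral_ite_log_div [IsProbabilityMeasure μ] (h : IndepFadingGains μ M G) (T : ℝ) :
    ∫ ω, (if T ≤ M ω then log (M ω / G ω) else 0) ∂μ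
      = ∫ ω, (if T ≤ M ω then log (M ω) - ∫ ω', log (G ω') ∂μ else 0) ∂μ := by
  have := Measure.isProbabilityMeasure_map (μ := μ) h.measurable_right.aemeasurable
  set F : ℝ × ℝ → ℝ := fun q => if T ≤ q.1 then log (q.1 / q.2) else 0
  have hF : Measurable F :=
    Measurable.ite (measurableSet_le measurable_const measurable_fst) (by fun_prop)
      measurable_const
  have hFi : Integrable (fun ω => F (M ω, G ω)) μ := by
    refine h.integrable_abs_log_sub.mono'
      (hF.comp (h.measurable_left.prodMk h.measurable_right)).aestronglyMeasurable ?_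
    filter_upwards [h.ae_pos_left, h.ae_pos_right] with ω hM hG
    simp only [F]
    split_ifs
    · rw [norm_eq_abs, log_div hM.ne' hG.ne']
    · simp
  have hpush : ∫ m, (if T ≤ m then log m - ∫ ω', log (G ω') ∂μ else 0) ∂(μ.map M)
      = ∫ ω, (if T ≤ M ω then log (M ω) - ∫ ω', log (G ω') ∂μ else 0) ∂μ :=
    integral_map h.measurable_left.aemeasurable (Measurable.ite
      (measurableSet_le measurable_const measurable_id) (by fun_prop)
      measurable_const).aestronglyMeasurable
  rw [h.indepFun.integral_comp_eq_integral_integral h.measurable_left h.measurable_right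
    hF.stronglyMeasurable hFi, ← hpush]
  refine integral_congr_ae ?_
  filter_upwards [h.ae_pos_map_left] with m hm
  change ∫ g, (if T ≤ m then log (m / g) else 0) ∂(μ.map G) = _
  split_ifs
  · rw [integral_congr_ae (h.ae_pos_map_right.mono fun g hg => log_div hm.ne' hg.ne'),
      integral_sub (integrable_const _) h.integrable_log_map_right, integral_const,
      probReal_univ, one_smul, h.integral_log_map_right]
  · exact integral_zero _ _

theorem integral_ite_log_div_le_highSNRSecrecyRate [IsProbabilityMeasure μ]
    (h : IndepFadingGains μ M G) (T : ℝ) :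
    ∫ ω, (if T ≤ M ω then log (M ω / G ω) else 0) ∂μ ≤ highSNRSecrecyRate μ M G := by
  set c := ∫ ω, log (G ω) ∂μ
  have hint : Integrable (fun ω => if T ≤ M ω then log (M ω) - c else 0) μ := by
    refine ((h.integrable_log_left.sub (integrable_const c)).indicator
      (measurableSet_le (measurable_const (a := T)) h.measurable_left)).congr
      (Eventually.of_forall fun ω => ?_)
    by_cases hT : T ≤ M ω <;> simp [hT]
  rw [h.integral_ite_log_div T, highSNRSecrecyRate]
  refine integral_mono hint (h.integrable_log_left.sub (integrable_const c)).pos_part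
    fun ω => ?_
  split_ifs
  exacts [le_max_left _ _, le_max_right _ _]

theorem integral_ite_log_div_exp_eq_highSNRSecrecyRate [IsProbabilityMeasure μ]
    (h : IndepFadingGains μ M G) :
    ∫ ω, (if exp (∫ ω', log (G ω') ∂μ) ≤ M ω then log (M ω / G ω) else 0) ∂μ
      = highSNRSecrecyRate μ M G := by
  rw [h.integral_ite_log_div, highSNRSecrecyRate]
  refine integral_congr_ae ?_
  filter_upwards [h.ae_pos_left] with ω hω
  split_ifs with hT
  · rw [max_eq_left]
    linarith [(le_log_iff_exp_le hω).2 hT]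
  · rw [max_eq_right]
    linarith [(log_lt_iff_lt_exp hω).2 (not_le.1 hT)]

theorem tendsto_integral_threshold (h : IndepFadingGains μ M G) (T : ℝ) :
    Tendsto (fun t => ∫ ω, (log (1 + M ω * (if T ≤ M ω then t else 0))
        - log (1 + G ω * (if T ≤ M ω then t else 0))) ∂μ) atTop
      (nhds (∫ ω, (if T ≤ M ω then log (M ω / G ω) else 0) ∂μ)) := by
  have hM := h.measurable_left
  have hG := h.measurable_right
  refine tendsto_integral_filter_of_dominated_convergence _ ?_ ?_ h.integrable_abs_log_sub ?_
  · refine Eventually.of_forall fun t => Measurable.aestronglyMeasurable ?_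
    have hq : Measurable fun ω => if T ≤ M ω then t else (0 : ℝ) :=
      Measurable.ite (measurableSet_le measurable_const hM) measurable_const measurable_const
    fun_prop
  · filter_upwards [eventually_ge_atTop 0] with t ht
    filter_upwards [h.ae_pos_left, h.ae_pos_right] with ω hMω hGω
    split_ifs
    · exact abs_log_one_add_mul_sub_log_one_add_mul_le hMω hGω ht
    · simp
  · filter_upwards [h.ae_pos_left, h.ae_pos_right] with ω hMω hGω
    split_ifs
    · rw [log_div hMω.ne' hGω.ne']
      exact tendsto_log_one_add_mul_sub_log_one_add_mul hMω hGω
    · simp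

theorem Rminus_le_highSNRSecrecyRate [IsProbabilityMeasure μ] (h : IndepFadingGains μ M G)
    (P : ℝ) : Rminus μ M G P ≤ highSNRSecrecyRate μ M G :=
  Real.sSup_le (fun _ ⟨_, hp, hp0, _, hr⟩ =>
      hr ▸ h.integral_log_one_add_mul_sub_le_highSNRSecrecyRate hp hp0)
    (highSNRSecrecyRate_nonneg μ M G)

theorem integral_threshold_le_Rminus [IsProbabilityMeasure μ] (h : IndepFadingGains μ M G)
    (T : ℝ) {P : ℝ} (hP : 0 ≤ P) :
    ∫ ω, (log (1 + M ω * (if T ≤ M ω then P else 0))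
        - log (1 + G ω * (if T ≤ M ω then P else 0))) ∂μ ≤ Rminus μ M G P := by
  have hq0 : ∀ x, 0 ≤ if T ≤ x then P else 0 := fun x => by split_ifs <;> simp [hP]
  have hqP : ∀ x, (if T ≤ x then P else 0) ≤ P := fun x => by split_ifs <;> simp [hP]
  refine le_csSup ⟨highSNRSecrecyRate μ M G, ?_⟩
    ⟨fun x => if T ≤ x then P else 0, ?_, hq0, ?_, rfl⟩
  · rintro _ ⟨p, hp, hp0, -, rfl⟩
    exact h.integral_log_one_add_mul_sub_le_highSNRSecrecyRate hp hp0
  · exact Measurable.ite (measurableSet_le measurable_const measurable_id) measurable_const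
      measurable_const
  · calc ∫ ω, (if T ≤ M ω then P else 0) ∂μ ≤ ∫ _, P ∂μ :=
          integral_mono_of_nonneg (Eventually.of_forall fun ω => hq0 (M ω))
            (integrable_const P) (Eventually.of_forall fun ω => hqP (M ω))
      _ = P := by simp

theorem tendsto_Rminus [IsProbabilityMeasure μ] (h : IndepFadingGains μ M G) :
    Tendsto (Rminus μ M G) atTop (nhds (highSNRSecrecyRate μ M G)) := by
  have hlim := h.tendsto_integral_threshold (exp (∫ ω, log (G ω) ∂μ))
  rw [h.integral_ite_log_div_exp_eq_highSNRSecrecyRate] at hlim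
  exact tendsto_of_tendsto_of_tendsto_of_le_of_le' hlim tendsto_const_nhds
    ((eventually_ge_atTop 0).mono fun P hP => h.integral_threshold_le_Rminus _ hP)
    (Eventually.of_forall h.Rminus_le_highSNRSecrecyRate)

theorem sSup_integral_ite_log_div [IsProbabilityMeasure μ] (h : IndepFadingGains μ M G) :
    sSup {r : ℝ | ∃ T : ℝ, 0 ≤ T ∧
        r = ∫ ω, (if T ≤ M ω then log (M ω / G ω) else 0) ∂μ}
      = highSNRSecrecyRate μ M G :=
  IsGreatest.csSup_eq
    ⟨⟨_, (exp_pos _).le, h.integral_ite_log_div_exp_eq_highSNRSecrecyRate.symm⟩,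
      by rintro _ ⟨T, -, rfl⟩; exact h.integral_ite_log_div_le_highSNRSecrecyRate T⟩

end IndepFadingGains

theorem indepFadingGains_iSup {Ω ι : Type*} [MeasurableSpace Ω] {μ : Measure Ω} [Fintype ι]
    [Nonempty ι] {H : ι → Ω → ℝ} {G : Ω → ℝ} (hH : ∀ i, Measurable (H i))
    (hG : Measurable G)
    (hindep : iIndepFun (fun i : Option ι => Option.elim i G H) μ)
    (hHpos : ∀ i, ∀ᵐ ω ∂μ, 0 < H i ω) (hGpos : ∀ᵐ ω ∂μ, 0 < G ω)
    (hHlog : ∀ i, Integrable (fun ω => log (H i ω)) μ)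
    (hGlog : Integrable (fun ω => log (G ω)) μ) :
    IndepFadingGains μ (fun ω => ⨆ i, H i ω) G where
  measurable_left := Measurable.iSup hH
  measurable_right := hG
  indepFun := hindep.indepFun_iSup_option hH hG
  ae_pos_left := by
    filter_upwards [ae_all_iff.2 hHpos] with ω hω
    obtain ⟨i, hi⟩ := exists_eq_ciSup_of_finite (f := fun i => H i ω)
    exact hi ▸ hω i
  ae_pos_right := hGpos
  integrable_log_left := by
    refine (integrable_finsetSum Finset.univ fun i _ => (hHlog i).abs).mono'
      (Measurable.iSup hH).log.aestronglyMeasurable (Eventually.of_forall fun ω => ?_)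
    obtain ⟨i, hi⟩ := exists_eq_ciSup_of_finite (f := fun i => H i ω)
    rw [← hi, norm_eq_abs]
    exact Finset.single_le_sum (f := fun j => |log (H j ω)|) (fun j _ => abs_nonneg _)
      (Finset.mem_univ i)
  integrable_log_right := hGlog

lemma ae_pos_and_integrable_log_of_map_eq_expMeasure {Ω : Type*} [MeasurableSpace Ω]
    {μ : Measure Ω} {X : Ω → ℝ} {r : ℝ} (hr : 0 < r) (hX : Measurable X)
    (hlaw : μ.map X = expMeasure r) :
    (∀ᵐ ω ∂μ, 0 < X ω) ∧ Integrable (fun ω => log (X ω)) μ :=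
  ⟨(ae_map_iff hX.aemeasurable measurableSet_Ioi).1 (hlaw ▸ ae_pos_expMeasure hr),
    (integrable_map_measure measurable_log.aestronglyMeasurable hX.aemeasurable).1
      (hlaw ▸ integrable_log_expMeasure hr)⟩

/-- Let `H₁,…,H_K, G` be independent `Exp(1)` random variables (`K ≥ 1`) and
`M = max(H₁,…,H_K)`.  Then
`lim_{P̄ → ∞} R⁻_K(P̄) = sup_{T ≥ 0} E[log(M/G) · 1{M ≥ T}]`. -/
theorem stmt16 {Ω : Type*} [MeasurableSpace Ω] (μ : Measure Ω)
    [IsProbabilityMeasure μ] {K : ℕ} (hK : 1 ≤ K)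
    (H : Fin K → Ω → ℝ) (G : Ω → ℝ)
    (hHm : ∀ i, Measurable (H i)) (hGm : Measurable G)
    (hIndep : iIndepFun
      (fun i : Option (Fin K) => Option.elim i G fun k => H k) μ)
    (hHd : ∀ i, Measure.map (H i) μ = expMeasure 1)
    (hGd : Measure.map G μ = expMeasure 1) :
    Filter.Tendsto (fun P : ℝ => Rminus μ (fun ω => ⨆ i : Fin K, H i ω) G P)
      Filter.atTop
      (nhds (sSup {r : ℝ | ∃ T : ℝ, 0 ≤ T ∧
        r = ∫ ω, (if T ≤ ⨆ i : Fin K, H i ω then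
            Real.log ((⨆ i : Fin K, H i ω) / G ω) else 0) ∂μ})) := by
  have : Nonempty (Fin K) := ⟨⟨0, hK⟩⟩
  have hHexp i := ae_pos_and_integrable_log_of_map_eq_expMeasure one_pos (hHm i) (hHd i)
  have hGexp := ae_pos_and_integrable_log_of_map_eq_expMeasure one_pos hGm hGd
  have h := indepFadingGains_iSup hHm hGm hIndep (fun i => (hHexp i).1) hGexp.1
    (fun i => (hHexp i).2) hGexp.2
  rw [h.sSup_integral_ite_log_div]
  exact h.tendsto_Rminus
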